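/- For every r̂ ∈ ℕ and every integer m ≥ 1, Var(μ^(b^m·r̂ + b^m − 1)) = (1/b^m)·Var(μ^(r̂)) + (1 − 1/b^m)·Var(μ^(r̂+1)) + b − 1/b^{m−1}. In particular (taking r̂ = 0), Var(μ^(b^m − 1)) = 2b − 2/b^{m−1}. -/

import Mathlib

open Filter Topology MeasureTheory

noncomputable section

/-- Sum of the base-`b` digits of `n`. -/
def digitSum (b n : ℕ) : ℕ := (Nat.digits b n).sum

/-- `Δ^(r)(n) = s(n+r) - s(n)`, the variation of the base-`b` digit sum when adding `r`. -/
def delta (b r n : ℕ) : ℤ := (digitSum b (n + r) : ℤ) - (digitSum b n : ℤ)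

/-!
On the residue class `n = B q + u` (with `B = b^t`), `Δ^(R)(n) = Δ^(r'(u))(q) + c(u)` for explicit
`r'(u)` and `c(u)`, so `μ^(R)` is the average over `u < B` of the translates of `μ^(r'(u))` by `c(u)`.
A priori mass could escape to `-∞`. But for `B = b` both the total mass minus `1` and the mean satisfy
`F(b r + y) = ((b - y) F(r) + y F(r + 1)) / b` and vanish at `r = 0`, which forces them to vanish
identically. Hence `Var(μ^(R)) = B⁻¹ ∑_u (Var(μ^(r'(u))) + c(u)²)`. For `R = b^m r̂ + b^m - 1`
one has `r'(0) = r̂`, `r'(u) = r̂ + 1` for `u ≠ 0`, and `∑_u c(u)² = b^(m+1) - b`, which comes from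
summing `(Δ^(1))²` over a full block of `b^m` integers.
-/

open Finset

variable {b : ℕ}

@[simp]
theorem digitSum_zero : digitSum b 0 = 0 := by simp [digitSum]

theorem digitSum_of_lt {x : ℕ} (hx : x < b) : digitSum b x = x := by
  rcases Nat.eq_zero_or_pos x with rfl | hx0
  · simp
  · simp [digitSum, Nat.digits_of_lt b x hx0.ne' hx]

theorem digitSum_pow_mul_add (hb : 2 ≤ b) {t v : ℕ} (hv : v < b ^ t) (q : ℕ) :
    digitSum b (b ^ t * q + v) = digitSum b q + digitSum b v := by
  rcases Nat.eq_zero_or_pos q with rfl | hq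
  · simp
  have hlen : (Nat.digits b v).length ≤ t := (Nat.digits_length_le_iff hb v).2 hv
  have h := Nat.digits_append_zeroes_append_digits (n := v) (k := t - (Nat.digits b v).length)
    hb hq
  rw [Nat.add_sub_cancel' hlen] at h
  rw [digitSum, digitSum, digitSum, add_comm, ← h]
  simp [add_comm]

theorem digitSum_pow (hb : 2 ≤ b) (t : ℕ) : digitSum b (b ^ t) = 1 := by
  simpa [digitSum_of_lt (by omega : 1 < b)] using digitSum_pow_mul_add hb (pow_pos (by omega) t) 1

theorem digitSum_pow_sub_one (hb : 2 ≤ b) (t : ℕ) : digitSum b (b ^ t - 1) = t * (b - 1) := by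
  induction t with
  | zero => simp
  | succ t ih =>
    have hbt := Nat.one_le_pow t b (by omega)
    have hsplit : b ^ (t + 1) - 1 = b ^ t * (b - 1) + (b ^ t - 1) := by
      have := Nat.le_mul_of_pos_right (b ^ t) (by omega : 0 < b)
      rw [pow_succ, Nat.mul_sub_one]
      omega
    rw [hsplit, digitSum_pow_mul_add hb (by omega), ih, digitSum_of_lt (by omega)]
    ring

theorem delta_zero (n : ℕ) : delta b 0 n = 0 := by simp [delta]

theorem delta_pow_mul_add_of_lt (hb : 2 ≤ b) {t u v : ℕ} (h : u + v < b ^ t) (r q : ℕ) :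
    delta b (b ^ t * r + v) (b ^ t * q + u) =
      delta b r q + ((digitSum b (u + v) : ℤ) - digitSum b u) := by
  have e : b ^ t * q + u + (b ^ t * r + v) = b ^ t * (q + r) + (u + v) := by ring
  simp only [delta, e, digitSum_pow_mul_add hb h, digitSum_pow_mul_add hb (by omega : u < b ^ t)]
  push_cast
  ring

theorem delta_pow_mul_add_of_le (hb : 2 ≤ b) {t u v : ℕ} (hu : u < b ^ t) (hv : v < b ^ t)
    (h : b ^ t ≤ u + v) (r q : ℕ) :
    delta b (b ^ t * r + v) (b ^ t * q + u) =
      delta b (r + 1) q + ((digitSum b (u + v - b ^ t) : ℤ) - digitSum b u) := by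
  have e : b ^ t * q + u + (b ^ t * r + v) = b ^ t * (q + (r + 1)) + (u + v - b ^ t) := by
    have := Nat.mul_add (b ^ t) q (r + 1)
    rw [Nat.mul_add_one] at this
    omega
  simp only [delta, e, digitSum_pow_mul_add hb (by omega : u + v - b ^ t < b ^ t),
    digitSum_pow_mul_add hb hu]
  push_cast
  ring

theorem delta_mul_add_of_lt (hb : 2 ≤ b) {u y : ℕ} (h : u + y < b) (r q : ℕ) :
    delta b (b * r + y) (b * q + u) = delta b r q + y := by
  have := delta_pow_mul_add_of_lt hb (t := 1) (by simpa using h) r q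
  rw [pow_one] at this
  rw [this, digitSum_of_lt h, digitSum_of_lt (by omega : u < b)]
  push_cast
  ring

theorem delta_mul_add_of_le (hb : 2 ≤ b) {u y : ℕ} (hu : u < b) (hy : y < b) (h : b ≤ u + y)
    (r q : ℕ) : delta b (b * r + y) (b * q + u) = delta b (r + 1) q + (y - b) := by
  have := delta_pow_mul_add_of_le hb (t := 1) (by simpa using hu) (by simpa using hy)
    (by simpa using h) r q
  rw [pow_one] at this
  rw [this, digitSum_of_lt (by omega : u + y - b < b), digitSum_of_lt hu]
  push_cast [h]
  ring

theorem delta_pow_mul_add_pow_sub_one (hb : 2 ≤ b) (m r q : ℕ) {u : ℕ} (hu : u < b ^ m) :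
    delta b (b ^ m * r + (b ^ m - 1)) (b ^ m * q + u) =
      delta b (if u = 0 then r else r + 1) q +
        (if u = 0 then ((m * (b - 1) : ℕ) : ℤ) else -delta b 1 (u - 1)) := by
  have hbm : 1 ≤ b ^ m := Nat.one_le_pow _ _ (by omega)
  split_ifs with hu0
  · subst hu0
    rw [delta_pow_mul_add_of_lt hb (by omega), zero_add, digitSum_pow_sub_one hb, digitSum_zero]
    simp
  · rw [delta_pow_mul_add_of_le hb hu (by omega) (by omega),
      show u + (b ^ m - 1) - b ^ m = u - 1 by omega]
    simp only [delta, Nat.sub_add_cancel (Nat.one_le_iff_ne_zero.2 hu0)]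
    ring

theorem delta_one_mul_add_of_lt (hb : 2 ≤ b) {x : ℕ} (hx : x + 1 < b) (q : ℕ) :
    delta b 1 (b * q + x) = 1 := by
  simpa [delta_zero] using delta_mul_add_of_lt hb hx 0 q

theorem delta_one_mul_add_pred (hb : 2 ≤ b) (q : ℕ) :
    delta b 1 (b * q + (b - 1)) = delta b 1 q + 1 - b := by
  have := delta_mul_add_of_le hb (u := b - 1) (by omega) hb (by omega) 0 q
  rw [mul_zero, zero_add] at this
  rw [this]
  push_cast
  ring

theorem sum_delta_one (K : ℕ) : ∑ v ∈ range K, delta b 1 v = digitSum b K := by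
  unfold delta
  simpa using sum_range_sub (fun v => (digitSum b v : ℤ)) K

theorem sum_range_mul_eq_sum_sum {M : Type*} [AddCommMonoid M] (f : ℕ → M) (B K : ℕ) :
    ∑ v ∈ range (B * K), f v = ∑ q ∈ range K, ∑ x ∈ range B, f (B * q + x) := by
  induction K with
  | zero => simp
  | succ K ih => rw [Nat.mul_succ, sum_range_add, ih, sum_range_succ]

theorem sum_sq_delta_one_mul_add (hb : 2 ≤ b) (q : ℕ) :
    ∑ x ∈ range b, delta b 1 (b * q + x) ^ 2 = (b - 1) + (delta b 1 q + 1 - b) ^ 2 := by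
  rw [← Nat.sub_add_cancel (by omega : 1 ≤ b), sum_range_succ,
    Nat.sub_add_cancel (by omega : 1 ≤ b),
    sum_congr rfl fun x hx => by rw [delta_one_mul_add_of_lt hb (by simp at hx; omega)],
    delta_one_mul_add_pred hb]
  simp [Nat.cast_sub (by omega : 1 ≤ b)]

theorem sum_sq_delta_one (hb : 2 ≤ b) (m : ℕ) :
    ∑ v ∈ range (b ^ m), delta b 1 v ^ 2 = 1 + b ^ (m + 1) - b - 2 * m * (b - 1) := by
  induction m with
  | zero => simp [delta, digitSum_of_lt (by omega : 1 < b)]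
  | succ m ih =>
    rw [pow_succ', sum_range_mul_eq_sum_sum,
      sum_congr rfl fun q _ => sum_sq_delta_one_mul_add hb q]
    have hexpand : ∀ q, ((b : ℤ) - 1) + (delta b 1 q + 1 - b) ^ 2 =
        delta b 1 q ^ 2 + 2 * (1 - b) * delta b 1 q + ((b - 1) + (b - 1) ^ 2) := fun q => by ring
    simp only [hexpand, sum_add_distrib, ← mul_sum, sum_const, card_range, nsmul_eq_mul, ih,
      sum_delta_one, digitSum_pow hb]
    push_cast
    ring

theorem sq_add_sum_sq_delta_one_pow_sub_one (hb : 2 ≤ b) (m : ℕ) :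
    ((m * (b - 1) : ℕ) : ℤ) ^ 2 + ∑ v ∈ range (b ^ m - 1), delta b 1 v ^ 2 = b ^ (m + 1) - b := by
  have hbm : 1 ≤ b ^ m := Nat.one_le_pow _ _ (by omega)
  have hS := sum_sq_delta_one hb m
  have hlast : delta b 1 (b ^ m - 1) = 1 - m * (b - 1) := by
    rw [delta, Nat.sub_add_cancel hbm, digitSum_pow hb, digitSum_pow_sub_one hb]
    push_cast [Nat.cast_sub (by omega : 1 ≤ b)]
    ring
  rw [← Nat.sub_add_cancel hbm, sum_range_succ, hlast] at hS
  push_cast [Nat.cast_sub (by omega : 1 ≤ b)]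
  linear_combination hS

theorem sum_range_ite_add_lt {M : Type*} [AddCommMonoid M] {y b : ℕ} (hy : y ≤ b) (A C : M) :
    ∑ u ∈ range b, (if u + y < b then A else C) = (b - y) • A + y • C := by
  conv_lhs => rw [← Nat.sub_add_cancel hy, sum_range_add]
  rw [sum_congr rfl fun u hu => if_pos (by simp at hu; omega),
    sum_congr rfl fun u _ => if_neg (by omega), sum_const, sum_const, card_range, card_range]

theorem eq_zero_of_digit_recursion (hb : 2 ≤ b) {G : ℕ → ℝ} (h0 : G 0 = 0)
    (h : ∀ r y, y < b → G (b * r + y) = ((b - y : ℕ) * G r + y * G (r + 1)) / b) (r : ℕ) :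
    G r = 0 := by
  induction r using Nat.strong_induction_on with
  | _ r ih =>
    have hr := h (r / b) (r % b) (Nat.mod_lt r (by omega))
    rw [Nat.div_add_mod] at hr
    rcases Nat.lt_or_ge r 2 with hr2 | hr2
    · interval_cases r
      · exact h0
      · -- `G 1` appears on both sides of its own recursion, with weight `1 / b < 1` on the right.
        rw [Nat.div_eq_of_lt (by omega), Nat.mod_eq_of_lt (by omega), h0,
          eq_div_iff (by positivity)] at hr
        have hb' : (1 : ℝ) < b := by exact_mod_cast hb
        push_cast at hr
        nlinarith
    · have hr0 : G (r / b) = 0 := ih _ (Nat.div_lt_self (by omega) (by omega))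
      have hr1 : (r % b : ℕ) * G (r / b + 1) = 0 := by
        rcases Nat.eq_zero_or_pos (r % b) with hy | hy
        · simp [hy]
        · rw [ih _ ?_, mul_zero]
          have := Nat.div_add_mod r b
          have : 2 * (r / b) ≤ b * (r / b) := Nat.mul_le_mul_right _ hb
          omega
      rw [hr, hr0, hr1]
      simp

theorem tendsto_natCast_div_of_abs_sub_le {B : ℕ} (hB : 0 < B) {f : ℕ → ℕ} {C : ℝ}
    (h : ∀ N, |(B * f N : ℝ) - N| ≤ C) :
    Tendsto (fun N : ℕ => (f N : ℝ) / N) atTop (𝓝 (1 / B)) := by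
  have hB' : (0 : ℝ) < B := by exact_mod_cast hB
  rw [tendsto_iff_norm_sub_tendsto_zero]
  refine squeeze_zero_norm' ?_ (tendsto_const_div_atTop_nhds_zero_nat (C / B))
  filter_upwards [eventually_gt_atTop 0] with N hN
  have hN' : (0 : ℝ) < N := by exact_mod_cast hN
  rw [norm_norm, Real.norm_eq_abs, div_sub_div _ _ hN'.ne' hB'.ne', abs_div,
    abs_of_pos (mul_pos hN' hB'), div_div, mul_comm (B : ℝ)]
  gcongr
  simpa [mul_comm] using h N

theorem card_filter_mod_eq_and_div {B u : ℕ} (hu : u < B) (P : ℕ → Prop) [DecidablePred P]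
    (N : ℕ) :
    #{n ∈ range N | n % B = u ∧ P (n / B)} = #{q ∈ range ((N + (B - 1 - u)) / B) | P q} := by
  have hB : 0 < B := by omega
  have hlt : ∀ q, B * q + u < N ↔ q < (N + (B - 1 - u)) / B := fun q => by
    rw [Nat.lt_iff_add_one_le (m := q), Nat.le_div_iff_mul_le hB, add_mul, one_mul, mul_comm]
    omega
  refine card_nbij' (· / B) (B * · + u) (fun n hn => ?_) (fun q hq => ?_) (fun n hn => ?_)
    (fun q _ => by simp only [Nat.mul_add_div hB, Nat.div_eq_of_lt hu, add_zero])
  · simp only [coe_filter, mem_range, Set.mem_ofPred_eq] at hn ⊢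
    obtain ⟨hnN, hnu, hP⟩ := hn
    refine ⟨(hlt _).1 ?_, hP⟩
    rwa [← hnu, Nat.div_add_mod]
  · simp only [coe_filter, mem_range, Set.mem_ofPred_eq] at hq ⊢
    refine ⟨(hlt q).2 hq.1, by rw [Nat.mul_add_mod, Nat.mod_eq_of_lt hu], ?_⟩
    rw [Nat.mul_add_div hB, Nat.div_eq_of_lt hu, add_zero]
    exact hq.2
  · simp only [coe_filter, mem_range, Set.mem_ofPred_eq] at hn
    simp only [← hn.2.1, Nat.div_add_mod]

def HasDensity (P : ℕ → Prop) [DecidablePred P] (a : ℝ) : Prop :=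
  Tendsto (fun N : ℕ => (#{n ∈ range N | P n} : ℝ) / N) atTop (𝓝 a)

namespace HasDensity

variable {P Q : ℕ → Prop} [DecidablePred P] [DecidablePred Q] {a a' : ℝ}

theorem unique (h : HasDensity P a) (h' : HasDensity P a') : a = a' :=
  tendsto_nhds_unique h h'

theorem nonneg (h : HasDensity P a) : 0 ≤ a :=
  ge_of_tendsto' h fun _ => by positivity

theorem congr (h : HasDensity P a) (hPQ : ∀ n, P n ↔ Q n) : HasDensity Q a := by
  simpa only [HasDensity, filter_congr fun n _ => hPQ n] using h

theorem const (p : Prop) [Decidable p] : HasDensity (fun _ => p) (if p then 1 else 0) := by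
  by_cases hp : p
  · refine tendsto_const_nhds.congr' ?_
    filter_upwards [eventually_ne_atTop 0] with N hN
    simp [hp, hN]
  · simp [HasDensity, hp]

theorem sum_mod {B : ℕ} (hB : 0 < B) {a : ℕ → ℝ}
    (h : ∀ u < B, HasDensity (fun n => n % B = u ∧ P n) (a u)) :
    HasDensity P (∑ u ∈ range B, a u) := by
  refine (tendsto_finsetSum _ fun u hu => h u (mem_range.1 hu)).congr fun N => ?_
  rw [← sum_div, card_eq_sum_card_fiberwise (f := (· % B)) (t := range B)
    fun n _ => mem_range.2 (Nat.mod_lt n hB)]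
  push_cast
  simp only [filter_filter, and_comm]

theorem comp_div {B u : ℕ} (hu : u < B) (h : HasDensity P a) :
    HasDensity (fun n => n % B = u ∧ P (n / B)) (a / B) := by
  have hB : 0 < B := by omega
  set Q : ℕ → ℕ := fun N => (N + (B - 1 - u)) / B
  have hQtop : Tendsto Q atTop atTop := tendsto_atTop_atTop.2 fun M =>
    ⟨B * M, fun N hN => (Nat.le_div_iff_mul_le hB).2 (by rw [mul_comm]; omega)⟩
  have hQratio : Tendsto (fun N : ℕ => (Q N : ℝ) / N) atTop (𝓝 (1 / B)) := by
    refine tendsto_natCast_div_of_abs_sub_le hB (C := B) fun N => abs_sub_le_iff.2 ⟨?_, ?_⟩ <;>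
    · have : B * Q N + (N + (B - 1 - u)) % B = N + (B - 1 - u) := Nat.div_add_mod _ _
      have := Nat.mod_lt (N + (B - 1 - u)) hB
      have hle : B * Q N ≤ N + B ∧ N ≤ B * Q N + B := by omega
      have hle' : (B * Q N : ℝ) ≤ N + B ∧ (N : ℝ) ≤ B * Q N + B := by exact_mod_cast hle
      linarith
  rw [← mul_one_div]
  refine ((h.comp hQtop).mul hQratio).congr fun N => ?_
  simp only [Function.comp_apply, card_filter_mod_eq_and_div hu]
  rcases Nat.eq_zero_or_pos (Q N) with hQ0 | hQ0
  · simp [Q, hQ0]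
  · rw [div_mul_div_cancel₀ (by exact_mod_cast hQ0.ne')]

end HasDensity

section Moments

variable (hb : 2 ≤ b) {μ : ℕ → ℤ → ℝ} (hμ : ∀ r d, HasDensity (fun n => delta b r n = d) (μ r d))
  {V : ℕ → ℝ} (hV : ∀ r, HasSum (fun d : ℤ => (d : ℝ) ^ 2 * μ r d) (V r))
include hμ

theorem mu_nonneg (r : ℕ) (d : ℤ) : 0 ≤ μ r d := (hμ r d).nonneg

theorem mu_eq_sum_of_decomp {B R : ℕ} {r' : ℕ → ℕ} {c : ℕ → ℤ}
    (hdec : ∀ u < B, ∀ q, delta b R (B * q + u) = delta b (r' u) q + c u) (hB : 0 < B) (d : ℤ) :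
    μ R d = ∑ u ∈ range B, μ (r' u) (d - c u) / B := by
  refine (hμ R d).unique (HasDensity.sum_mod hB fun u hu => ((hμ _ _).comp_div hu).congr ?_)
  refine fun n => and_congr_right fun hn => ?_
  rw [← hn, eq_sub_iff_add_eq, ← hdec _ (Nat.mod_lt n hB), Nat.div_add_mod]

theorem hasSum_mul_mu_of_decomp {B R : ℕ} {r' : ℕ → ℕ} {c : ℕ → ℤ}
    (hdec : ∀ u < B, ∀ q, delta b R (B * q + u) = delta b (r' u) q + c u) (hB : 0 < B)
    (g : ℤ → ℝ) {a : ℕ → ℝ} (ha : ∀ u < B, HasSum (fun e => g (e + c u) * μ (r' u) e) (a u)) :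
    HasSum (fun d => g d * μ R d) ((∑ u ∈ range B, a u) / B) := by
  have hshift : ∀ u < B, HasSum (fun d => g d * μ (r' u) (d - c u) / B) (a u / B) :=
    fun u hu => by
      simpa using ((Equiv.subRight (c u)).hasSum_iff.2 (ha u hu)).div_const (B : ℝ)
  rw [sum_div]
  convert hasSum_sum fun u hu => hshift u (mem_range.1 hu) using 1
  ext d
  rw [mu_eq_sum_of_decomp hμ hdec hB, mul_sum]
  simp only [mul_div_assoc]

theorem hasSum_mul_mu_zero (g : ℤ → ℝ) : HasSum (fun d => g d * μ 0 d) (g 0) := by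
  have hμ0 : ∀ d, μ 0 d = if d = 0 then 1 else 0 := fun d =>
    (hμ 0 d).unique ((HasDensity.const (d = 0)).congr fun n => by rw [delta_zero, eq_comm])
  simpa [hμ0] using hasSum_single (f := fun d => g d * μ 0 d) 0 fun d hd => by simp [hμ0, hd]

include hb in
theorem hasSum_mul_mu_digit (g : ℤ → ℝ) {a : ℕ → ℤ → ℝ}
    (ha : ∀ r c, HasSum (fun e => g (e + c) * μ r e) (a r c)) {y : ℕ} (hy : y < b) (r : ℕ) :
    HasSum (fun d => g d * μ (b * r + y) d)
      (((b - y : ℕ) * a r y + y * a (r + 1) (y - b)) / b) := by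
  have hdec : ∀ u < b, ∀ q, delta b (b * r + y) (b * q + u) =
      delta b (if u + y < b then r else r + 1) q + (if u + y < b then (y : ℤ) else y - b) := by
    intro u hu q
    split_ifs with h
    · exact delta_mul_add_of_lt hb h r q
    · exact delta_mul_add_of_le hb hu hy (not_lt.1 h) r q
  convert hasSum_mul_mu_of_decomp hμ hdec (by omega) g fun u _ => ha _ _ using 2
  rw [sum_congr rfl fun u _ => apply_ite₂ a (u + y < b) _ _ _ _, sum_range_ite_add_lt hy.le,
    nsmul_eq_mul, nsmul_eq_mul]

include hV

theorem summable_mu (r : ℕ) : Summable (μ r) := by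
  refine (hV r).summable.of_norm_bounded_eventually ?_
  filter_upwards [eventually_cofinite_ne 0] with d hd
  rw [Real.norm_of_nonneg (mu_nonneg hμ r d)]
  refine le_mul_of_one_le_left (mu_nonneg hμ r d) ?_
  have : (1 : ℤ) ≤ d ^ 2 := by nlinarith [Int.one_le_abs hd, sq_abs d]
  exact_mod_cast this

theorem summable_mul_mu (r : ℕ) : Summable (fun d : ℤ => (d : ℝ) * μ r d) := by
  refine (hV r).summable.of_norm_bounded fun d => ?_
  rw [norm_mul, Real.norm_of_nonneg (mu_nonneg hμ r d)]
  refine mul_le_mul_of_nonneg_right ?_ (mu_nonneg hμ r d)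
  rw [Real.norm_eq_abs, ← Int.cast_abs, Int.abs_eq_natAbs]
  exact_mod_cast Int.natAbs_le_self_sq d

theorem variance_zero : V 0 = 0 := by
  simpa using (hV 0).unique (hasSum_mul_mu_zero hμ _)

include hb

theorem hasSum_mu (r : ℕ) : HasSum (μ r) 1 := by
  have hM : ∀ r (c : ℤ), HasSum (fun e => (fun _ => (1 : ℝ)) (e + c) * μ r e) (∑' d, μ r d) :=
    fun r _ => by simpa using (summable_mu hμ hV r).hasSum
  have hM1 : ∀ r, ∑' d, μ r d - 1 = 0 := by
    refine eq_zero_of_digit_recursion hb ?_ fun r y hy => ?_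
    · exact sub_eq_zero.2 ((hM 0 0).unique (by simpa using hasSum_mul_mu_zero hμ fun _ => 1))
    · rw [(hM _ 0).unique (hasSum_mul_mu_digit hb hμ (fun _ => 1) hM hy r)]
      have : ((b - y : ℕ) : ℝ) + y = b := by rw [Nat.cast_sub hy.le]; ring
      field_simp
      linear_combination this
  rw [← sub_eq_zero.1 (hM1 r)]
  exact (summable_mu hμ hV r).hasSum

theorem hasSum_mul_mu (r : ℕ) : HasSum (fun d : ℤ => (d : ℝ) * μ r d) 0 := by
  have hE : ∀ r (c : ℤ), HasSum (fun e : ℤ => ((e + c : ℤ) : ℝ) * μ r e)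
      ((∑' d : ℤ, (d : ℝ) * μ r d) + c) := fun r c => by
    convert (summable_mul_mu hμ hV r).hasSum.add ((hasSum_mu hb hμ hV r).mul_left (c : ℝ))
      using 1
    · ext e; push_cast; ring
    · ring
  have hE0 : ∀ r, ∑' d : ℤ, (d : ℝ) * μ r d = 0 := by
    refine eq_zero_of_digit_recursion hb ?_ fun r y hy => ?_
    · simpa using (summable_mul_mu hμ hV 0).hasSum.unique (hasSum_mul_mu_zero hμ _)
    · rw [(summable_mul_mu hμ hV _).hasSum.unique
        (hasSum_mul_mu_digit hb hμ (fun d => (d : ℝ)) hE hy r), Nat.cast_sub hy.le]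
      push_cast
      ring
  rw [← hE0 r]
  exact (summable_mul_mu hμ hV r).hasSum

theorem hasSum_sq_add_mul_mu (r : ℕ) (c : ℤ) :
    HasSum (fun e : ℤ => ((e + c : ℤ) : ℝ) ^ 2 * μ r e) (V r + c ^ 2) := by
  convert ((hV r).add ((hasSum_mul_mu hb hμ hV r).mul_left (2 * (c : ℝ)))).add
    ((hasSum_mu hb hμ hV r).mul_left ((c : ℝ) ^ 2)) using 1
  · ext e; push_cast; ring
  · ring

theorem variance_eq_of_decomp {B R : ℕ} {r' : ℕ → ℕ} {c : ℕ → ℤ}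
    (hdec : ∀ u < B, ∀ q, delta b R (B * q + u) = delta b (r' u) q + c u) (hB : 0 < B) :
    V R = (∑ u ∈ range B, (V (r' u) + (c u : ℝ) ^ 2)) / B :=
  (hV R).unique (hasSum_mul_mu_of_decomp hμ hdec hB (fun d => (d : ℝ) ^ 2)
    fun u _ => hasSum_sq_add_mul_mu hb hμ hV (r' u) (c u))

theorem variance_one : V 1 = b := by
  have h := (hV 1).unique (hasSum_mul_mu_digit hb hμ (fun d => (d : ℝ) ^ 2)
    (hasSum_sq_add_mul_mu hb hμ hV) (y := 1) (by omega) 0)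
  rw [variance_zero hμ hV, Nat.cast_sub (by omega), eq_div_iff (by positivity)] at h
  have hb' : (1 : ℝ) < b := by exact_mod_cast hb
  push_cast at h
  nlinarith

theorem variance_pow_mul_add_pow_sub_one (m r : ℕ) :
    V (b ^ m * r + (b ^ m - 1)) =
      (V r + ((b : ℝ) ^ m - 1) * V (r + 1) + (b ^ (m + 1) - b)) / b ^ m := by
  have hbm : 1 ≤ b ^ m := Nat.one_le_pow _ _ (by omega)
  have hsq := congrArg (Int.cast : ℤ → ℝ) (sq_add_sum_sq_delta_one_pow_sub_one hb m)
  rw [variance_eq_of_decomp hb hμ hV (fun u hu q => delta_pow_mul_add_pow_sub_one hb m r q hu)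
    (by omega), ← Nat.sub_add_cancel hbm, sum_range_succ', Nat.sub_add_cancel hbm]
  simp only [Nat.add_one_ne_zero, if_false, if_true, add_tsub_cancel_right, sum_add_distrib,
    sum_const, card_range, nsmul_eq_mul, Int.cast_neg, neg_sq]
  push_cast [Nat.cast_sub hbm] at hsq ⊢
  congr 1
  linear_combination hsq

end Moments

/-- **Lemma (variance with a rightmost block of `(b-1)`'s).** For every `r̂ ∈ ℕ` and `m ≥ 1`,
`Var(μ^(b^m·r̂+b^m-1)) = (1/b^m)·Var(μ^(r̂)) + (1-1/b^m)·Var(μ^(r̂+1)) + b - 1/b^(m-1)`;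
in particular `Var(μ^(b^m-1)) = 2b - 2/b^(m-1)`. -/
theorem variance_block_b_minus_one (b : ℕ) (hb : 2 ≤ b)
    (μ : ℕ → ℤ → ℝ)
    (hμ : ∀ (r : ℕ) (d : ℤ),
      Tendsto (fun N : ℕ =>
        (((Finset.range N).filter fun n => delta b r n = d).card : ℝ) / N)
        atTop (𝓝 (μ r d)))
    (V : ℕ → ℝ)
    (hV : ∀ r : ℕ, HasSum (fun d : ℤ => (d : ℝ) ^ 2 * μ r d) (V r))
    (rhat : ℕ) (m : ℕ) (hm : 1 ≤ m) :
    V (b ^ m * rhat + (b ^ m - 1)) =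
      (1 / (b : ℝ) ^ m) * V rhat + (1 - 1 / (b : ℝ) ^ m) * V (rhat + 1) +
        (b : ℝ) - 1 / (b : ℝ) ^ (m - 1) ∧
    V (b ^ m - 1) = 2 * (b : ℝ) - 2 / (b : ℝ) ^ (m - 1) := by
  obtain ⟨k, rfl⟩ : ∃ k, m = k + 1 := ⟨m - 1, by omega⟩
  have hblock := variance_pow_mul_add_pow_sub_one hb hμ hV (k + 1)
  have hb0 : (b : ℝ) ≠ 0 := by positivity
  rw [Nat.add_sub_cancel]
  refine ⟨?_, ?_⟩
  · rw [hblock]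
    field_simp
    ring
  · have h0 := hblock 0
    rw [mul_zero, zero_add] at h0
    rw [h0, variance_zero hμ hV, variance_one hb hμ hV]
    field_simp
    ring
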